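/- arXiv:math-ph/0506009 — 6 statements merged into one kernel-verified Lean document; each statement's English description precedes it below -/
import Mathlib

section
/- Let C11, C12, C21, C22 be n×n complex matrices. The conditions (BC-CC): C12·C11* = C11·C12*, C21·C22* = C22·C21*, and C11·C22* − C12·C21* = I_n, hold if and only if the conditions (BC-CC2): C11*·C21 = C21*·C11, C12*·C22 = C22*·C12, and C11*·C22 − C21*·C12 = I_n, hold. -/
/-!
With `M = fromBlocks C11 C12 C21 C22` and `J` the standard symplectic matrix, (BC-CC) says
`M * J * Mᴴ = J`, and (BC-CC2) is the same condition for the blocks of `Mᴴ`, i.e.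
`Mᴴ * J * M = J`. As `J * J = -1`, either identity exhibits a one-sided inverse of the square
matrix `M`, which is then two-sided, and this gives the other identity.
-/

open Matrix

namespace Matrix

variable {l R : Type*} [Fintype l] [DecidableEq l] [CommRing R]

/-- `-J * A * J` is a left inverse of `B`, hence also a right inverse. -/
theorem mul_mul_eq_self_comm {A B J : Matrix l l R} (hJ : J * J = -1) (h : A * J * B = J) :
    B * J * A = J := by
  have hleft : (-J * A * J) * B = 1 := by
    rw [mul_assoc, mul_assoc, ← mul_assoc A, h, neg_mul, hJ, neg_neg]
  have hright : B * (-J * A * J) * J = J := by rw [mul_eq_one_comm.mp hleft, one_mul]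
  simpa [mul_assoc, hJ] using hright

theorem mul_mul_eq_self_iff_comm {A B J : Matrix l l R} (hJ : J * J = -1) :
    A * J * B = J ↔ B * J * A = J :=
  ⟨mul_mul_eq_self_comm hJ, mul_mul_eq_self_comm hJ⟩

variable [StarRing R]

theorem fromBlocks_mul_J_mul_conjTranspose (A B C D : Matrix l l R) :
    fromBlocks A B C D * J l R * (fromBlocks A B C D)ᴴ =
      fromBlocks (B * Aᴴ - A * Bᴴ) (B * Cᴴ - A * Dᴴ) (D * Aᴴ - C * Bᴴ) (D * Cᴴ - C * Dᴴ) := by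
  simp only [J, fromBlocks_conjTranspose, fromBlocks_multiply]
  congr 1 <;> noncomm_ring

theorem fromBlocks_mul_J_mul_conjTranspose_eq_J_iff (A B C D : Matrix l l R) :
    fromBlocks A B C D * J l R * (fromBlocks A B C D)ᴴ = J l R ↔
      B * Aᴴ = A * Bᴴ ∧ C * Dᴴ = D * Cᴴ ∧ A * Dᴴ - B * Cᴴ = 1 := by
  have hadj : (A * Dᴴ - B * Cᴴ)ᴴ = D * Aᴴ - C * Bᴴ := by
    simp only [conjTranspose_sub, conjTranspose_mul, conjTranspose_conjTranspose]
  rw [fromBlocks_mul_J_mul_conjTranspose, J, fromBlocks_inj, sub_eq_zero, sub_eq_zero,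
    eq_comm (a := D * Cᴴ), ← hadj, ← neg_sub, neg_inj]
  constructor
  · rintro ⟨h11, h12, -, h22⟩
    exact ⟨h11, h22, h12⟩
  · rintro ⟨h11, h22, h12⟩
    exact ⟨h11, h12, by rw [h12, conjTranspose_one], h22⟩

end Matrix

/-- The self-adjointness conditions (BC-CC) on the blocks of a transfer matrix
are equivalent to the conditions (BC-CC2). -/
theorem bc_cc_iff_bc_cc2 {n : ℕ} (C11 C12 C21 C22 : Matrix (Fin n) (Fin n) ℂ) :
    (C12 * C11ᴴ = C11 * C12ᴴ ∧ C21 * C22ᴴ = C22 * C21ᴴ ∧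
      C11 * C22ᴴ - C12 * C21ᴴ = 1) ↔
    (C11ᴴ * C21 = C21ᴴ * C11 ∧ C12ᴴ * C22 = C22ᴴ * C12 ∧
      C11ᴴ * C22 - C21ᴴ * C12 = 1) := by
  set M := fromBlocks C11 C12 C21 C22
  have hMH : Mᴴ = fromBlocks C11ᴴ C21ᴴ C12ᴴ C22ᴴ := fromBlocks_conjTranspose ..
  calc _ ↔ M * J (Fin n) ℂ * Mᴴ = J (Fin n) ℂ :=
        (fromBlocks_mul_J_mul_conjTranspose_eq_J_iff ..).symm
    _ ↔ Mᴴ * J (Fin n) ℂ * Mᴴᴴ = J (Fin n) ℂ := by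
        rw [conjTranspose_conjTranspose]; exact mul_mul_eq_self_iff_comm (J_squared ..)
    _ ↔ _ := by
        rw [hMH, fromBlocks_mul_J_mul_conjTranspose_eq_J_iff]
        simp only [conjTranspose_conjTranspose, eq_comm (a := C21ᴴ * C11)]
end

section
/- Let C11, C12, C21, C22 be complex numbers satisfying C12·conj(C11) = C11·conj(C12), C21·conj(C22) = C22·conj(C21), and C11·conj(C22) − C12·conj(C21) = 1. Then there exist a real number θ and real numbers a, b, c, d with a·d − b·c = 1 such that C11 = e^{iθ}·a, C12 = e^{iθ}·b, C21 = e^{iθ}·c, and C22 = e^{iθ}·d. -/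
/-!
Both hypotheses `C12 · conj C11 ∈ ℝ` and `C21 · conj C22 ∈ ℝ` say that the entries of each row
are real multiples of one unit vector, so `(C11, C12) = e^{iθ}(a, b)` and `(C21, C22) = e^{iφ}(c, d)`
with `a, b, c, d` real. The determinant condition then reads `e^{iθ} e^{-iφ} k = 1` with
`k = ad - bc` real, which forces `k = ±1` and `e^{iφ} = k e^{iθ}`; replacing `(c, d)` by
`k (c, d)` puts all four entries on the common phase `θ` with determinant `k² = 1`.
-/

open Complex ComplexConjugate

namespace Complex

theorem exists_real_mul_of_mul_conj_comm {z w : ℂ} (hz : z ≠ 0)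
    (h : z * conj w = w * conj z) : ∃ t : ℝ, w = t * z := by
  have hreal : ((w * conj z).re : ℂ) = w * conj z := by
    rw [← conj_eq_iff_re, map_mul, conj_conj, mul_comm, h]
  refine ⟨(w * conj z).re / normSq z, ?_⟩
  have hnormSq : (normSq z : ℂ) ≠ 0 := by exact_mod_cast normSq_pos.mpr hz |>.ne'
  push_cast
  rw [hreal, div_mul_eq_mul_div, eq_div_iff hnormSq, mul_assoc, mul_comm (conj z), mul_conj]

theorem exists_common_phase_of_mul_conj_comm {z w : ℂ} (h : z * conj w = w * conj z) :
    ∃ θ a b : ℝ, z = exp (θ * I) * a ∧ w = exp (θ * I) * b := by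
  by_cases hz : z = 0
  · exact ⟨arg w, 0, ‖w‖, by simp [hz], by rw [mul_comm, norm_mul_exp_arg_mul_I]⟩
  · obtain ⟨t, rfl⟩ := exists_real_mul_of_mul_conj_comm hz h
    refine ⟨arg z, ‖z‖, t * ‖z‖, by rw [mul_comm, norm_mul_exp_arg_mul_I], ?_⟩
    conv_lhs => rw [← norm_mul_exp_arg_mul_I z]
    push_cast
    ring

theorem exp_ofReal_mul_I_mul_conj (φ : ℝ) : exp (φ * I) * conj (exp (φ * I)) = 1 := by
  rw [mul_conj', norm_exp_ofReal_mul_I, ofReal_one, one_pow]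

end Complex

/-- The scalar (n = 1) case of the conditions (BC-CC): the entries of the transfer matrix
have the form e^{iθ} times a real matrix of determinant one. -/
theorem scalar_transfer_matrix_form (C11 C12 C21 C22 : ℂ)
    (h1 : C12 * (starRingEnd ℂ) C11 = C11 * (starRingEnd ℂ) C12)
    (h2 : C21 * (starRingEnd ℂ) C22 = C22 * (starRingEnd ℂ) C21)
    (h3 : C11 * (starRingEnd ℂ) C22 - C12 * (starRingEnd ℂ) C21 = 1) :
    ∃ (θ a b c d : ℝ), a * d - b * c = 1 ∧
      C11 = Complex.exp (θ * Complex.I) * a ∧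
      C12 = Complex.exp (θ * Complex.I) * b ∧
      C21 = Complex.exp (θ * Complex.I) * c ∧
      C22 = Complex.exp (θ * Complex.I) * d := by
  obtain ⟨θ, b, a, h12, h11⟩ := exists_common_phase_of_mul_conj_comm h1
  obtain ⟨φ, c, d, h21, h22⟩ := exists_common_phase_of_mul_conj_comm h2
  set E := exp (θ * I)
  set F := exp (φ * I)
  set k : ℝ := a * d - b * c with hk
  have hdet : E * conj F * k = 1 := by
    rw [← h3, h11, h12, h21, h22]
    simp only [map_mul, conj_ofReal, hk]
    push_cast
    ring
  have hF : F = E * k := calc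
    F = F * (E * conj F * k) := by rw [hdet, mul_one]
    _ = E * k * (F * conj F) := by ring
    _ = E * k := by rw [exp_ofReal_mul_I_mul_conj, mul_one]
  have hk_sq : k * k = 1 := by
    have := congrArg norm hdet
    rw [norm_mul, norm_mul, RCLike.norm_conj, norm_exp_ofReal_mul_I, norm_exp_ofReal_mul_I,
      norm_real, norm_one, one_mul, one_mul, Real.norm_eq_abs] at this
    rw [← abs_mul_abs_self, this, one_mul]
  refine ⟨θ, a, b, k * c, k * d, by linear_combination k * hk + hk_sq, h11, h12, ?_, ?_⟩
  · rw [h21, hF]; push_cast; ring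
  · rw [h22, hF]; push_cast; ring
end

section
/- Let A and B be n×n complex matrices with A·B* = B·A* and A·A* + B·B* invertible. Then B + iA is invertible, the matrix U := (B + iA)⁻¹·(B − iA) is unitary, and for all vectors v, w ∈ ℂⁿ one has A·v = B·w if and only if (I_n − U)·v = i·(I_n + U)·w. -/
open Matrix

/-- If A·B^* = B·A^* and A·A^* + B·B^* is invertible, then B + iA is invertible,
U := (B + iA)⁻¹·(B - iA) is unitary, and the boundary condition A·v = B·w is equivalent
to (1 - U)·v = i·(1 + U)·w. -/
theorem boundary_conditions_unitary_parameterization {n : ℕ}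
    (A B : Matrix (Fin n) (Fin n) ℂ)
    (h1 : A * Bᴴ = B * Aᴴ) (h2 : IsUnit (A * Aᴴ + B * Bᴴ)) :
    IsUnit (B + Complex.I • A) ∧
    (let U : Matrix (Fin n) (Fin n) ℂ := (B + Complex.I • A)⁻¹ * (B - Complex.I • A)
     U * Uᴴ = 1 ∧ Uᴴ * U = 1 ∧
     ∀ v w : Fin n → ℂ,
       A.mulVec v = B.mulVec w ↔
         ((1 : Matrix (Fin n) (Fin n) ℂ) - U).mulVec v =
           Complex.I • (((1 : Matrix (Fin n) (Fin n) ℂ) + U).mulVec w)) := by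
  set M := B + Complex.I • A with hMdef
  set N := B - Complex.I • A with hNdef
  have hconj : (Complex.I • A)ᴴ = (-Complex.I) • Aᴴ := by
    simp [conjTranspose_smul, Complex.star_def, Complex.conj_I]
  have hMM : M * Mᴴ = A * Aᴴ + B * Bᴴ := by
    rw [hMdef, conjTranspose_add, hconj]
    simp only [Matrix.add_mul, Matrix.mul_add, Matrix.smul_mul, Matrix.mul_smul, smul_smul,
      h1, smul_add, smul_sub, smul_smul, mul_neg, neg_mul, neg_neg, Complex.I_mul_I,
      neg_smul, one_smul]
    abel
  have hNN : N * Nᴴ = A * Aᴴ + B * Bᴴ := by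
    rw [hNdef, conjTranspose_sub, hconj]
    simp only [Matrix.sub_mul, Matrix.mul_sub, Matrix.smul_mul, Matrix.mul_smul, smul_smul,
      h1, smul_add, smul_sub, smul_smul, mul_neg, neg_mul, neg_neg, Complex.I_mul_I,
      neg_smul, one_smul]
    abel
  have hMunit : IsUnit M := by
    rw [Matrix.isUnit_iff_isUnit_det]
    have := (Matrix.isUnit_iff_isUnit_det _).mp (hMM ▸ h2)
    rw [Matrix.det_mul] at this
    exact isUnit_of_mul_isUnit_left this
  have hMdet : IsUnit M.det := (Matrix.isUnit_iff_isUnit_det _).mp hMunit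
  have hMHdet : IsUnit Mᴴ.det := by
    rw [Matrix.det_conjTranspose]; exact hMdet.star
  have hUU : M⁻¹ * N * (M⁻¹ * N)ᴴ = 1 := by
    rw [conjTranspose_mul, conjTranspose_nonsing_inv]
    calc M⁻¹ * N * (Nᴴ * Mᴴ⁻¹) = M⁻¹ * (N * Nᴴ) * Mᴴ⁻¹ := by
          simp only [Matrix.mul_assoc]
      _ = M⁻¹ * (M * Mᴴ) * Mᴴ⁻¹ := by rw [hNN, hMM]
      _ = 1 := by
          rw [← Matrix.mul_assoc, Matrix.nonsing_inv_mul _ hMdet,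
            Matrix.one_mul, Matrix.mul_nonsing_inv _ hMHdet]
  refine ⟨hMunit, hUU, mul_eq_one_comm.mp hUU, ?_⟩
  intro v w
  have hMN1 : (1 : Matrix (Fin n) (Fin n) ℂ) - M⁻¹ * N = M⁻¹ * ((2 * Complex.I) • A) := by
    rw [← Matrix.nonsing_inv_mul M hMdet, ← Matrix.mul_sub]
    congr 1
    rw [hMdef, hNdef]
    module
  have hMN2 : (1 : Matrix (Fin n) (Fin n) ℂ) + M⁻¹ * N = M⁻¹ * ((2:ℂ) • B) := by
    rw [← Matrix.nonsing_inv_mul M hMdet, ← Matrix.mul_add]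
    congr 1
    rw [hMdef, hNdef]
    module
  have lhs_eq : ((1 : Matrix (Fin n) (Fin n) ℂ) - M⁻¹ * N).mulVec v
      = M⁻¹.mulVec ((2 * Complex.I) • A.mulVec v) := by
    rw [hMN1, ← Matrix.mulVec_mulVec, Matrix.smul_mulVec, Matrix.mulVec_smul]
  have rhs_eq : Complex.I • (((1 : Matrix (Fin n) (Fin n) ℂ) + M⁻¹ * N).mulVec w)
      = M⁻¹.mulVec ((2 * Complex.I) • B.mulVec w) := by
    rw [hMN2, ← Matrix.mulVec_mulVec, Matrix.smul_mulVec, ← Matrix.mulVec_smul,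
      smul_smul, mul_comm]
  rw [lhs_eq, rhs_eq]
  have hinj : Function.Injective (M⁻¹).mulVec := by
    intro x y hxy
    have := congrArg M.mulVec hxy
    rwa [Matrix.mulVec_mulVec, Matrix.mulVec_mulVec,
      Matrix.mul_nonsing_inv _ hMdet, Matrix.one_mulVec, Matrix.one_mulVec] at this
  have h2I : (2 * Complex.I : ℂ) ≠ 0 := by
    simp [Complex.I_ne_zero]
  constructor
  · intro h; rw [h]
  · intro h
    exact smul_right_injective _ h2I (hinj h)
end

section
/- Let A and B be 2n×2n complex matrices with A·B* = B·A* and such that the 2n×4n block matrix (A B) has maximal rank 2n. Define the 2n×2n block matrices D1 = [[0, −I_n],[0, I_n]] and D2 = [[I_n, 0],[I_n, 0]], and set L = (1/2)(A·D1 + B·D2) and M = B·D1 − A·D2. Then L·M* = M·L* and the 2n×4n block matrix (L M) has maximal rank 2n. -/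
/-!
With `J = [[0, -1], [1, 0]]`, the condition `A B* = B A*` says that the rows of `(A B)` span an
isotropic subspace of the form `X ↦ X J X*`, since `(A B) J (A B)* = B A* - A B*`. The passage
from `(A B)` to `(L M)` is right multiplication by `T = [[D₁/2, -D₂], [D₂/2, D₁]]`, and the
relations `D₁ D₂* = D₂ D₁* = 0`, `D₁ D₁* + D₂ D₂* = 2` give `T J T* = J`. So `T` preserves the
form, which transports the first condition, and `T` is invertible, which preserves the rank.
-/

open Matrix

namespace Matrix

section HermitianSymplectic

variable {R m l : Type*} [CommRing R] [StarRing R] [Fintype l] [DecidableEq l]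

theorem fromCols_mul_J_mul_conjTranspose (A B : Matrix m l R) :
    fromCols A B * J l R * (fromCols A B)ᴴ = B * Aᴴ - A * Bᴴ := by
  rw [J, fromCols_mul_fromBlocks, conjTranspose_fromCols_eq_fromRows_conjTranspose,
    fromCols_mul_fromRows]
  simp [sub_eq_add_neg]

theorem isUnit_det_of_mul_J_mul_conjTranspose_eq {T : Matrix (l ⊕ l) (l ⊕ l) R}
    (hT : T * J l R * Tᴴ = J l R) : IsUnit T.det := by
  have hdet := congrArg det hT
  rw [det_mul, det_mul] at hdet
  exact isUnit_of_mul_isUnit_left (isUnit_of_mul_isUnit_left (hdet ▸ isUnit_det_J l R))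

variable {A B L M : Matrix m l R} {T : Matrix (l ⊕ l) (l ⊕ l) R}

theorem mul_conjTranspose_comm_of_fromCols_eq_mul (hT : T * J l R * Tᴴ = J l R)
    (hLM : fromCols L M = fromCols A B * T) (h : A * Bᴴ = B * Aᴴ) : L * Mᴴ = M * Lᴴ := by
  have hform : fromCols L M * J l R * (fromCols L M)ᴴ =
      fromCols A B * J l R * (fromCols A B)ᴴ := by
    rw [hLM, conjTranspose_mul, ← congrArg (fromCols A B * · * (fromCols A B)ᴴ) hT]
    simp only [Matrix.mul_assoc]
  rw [fromCols_mul_J_mul_conjTranspose, fromCols_mul_J_mul_conjTranspose, h, sub_self,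
    sub_eq_zero] at hform
  exact hform.symm

theorem rank_fromCols_eq_of_fromCols_eq_mul (hT : T * J l R * Tᴴ = J l R)
    (hLM : fromCols L M = fromCols A B * T) : (fromCols L M).rank = (fromCols A B).rank := by
  rw [hLM, rank_mul_eq_left_of_isUnit_det _ _ (isUnit_det_of_mul_J_mul_conjTranspose_eq hT)]

end HermitianSymplectic

theorem fromBlocks_half_mul_J_mul_conjTranspose {R l : Type*} [Field R] [StarRing R]
    [NeZero (2 : R)] [Fintype l] [DecidableEq l] {D₁ D₂ : Matrix l l R}
    (h₁₂ : D₁ * D₂ᴴ = 0) (h₂₁ : D₂ * D₁ᴴ = 0) (hsum : D₁ * D₁ᴴ + D₂ * D₂ᴴ = 2) :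
    fromBlocks ((1 / 2 : R) • D₁) (-D₂) ((1 / 2 : R) • D₂) D₁ * J l R *
      (fromBlocks ((1 / 2 : R) • D₁) (-D₂) ((1 / 2 : R) • D₂) D₁)ᴴ = J l R := by
  have half : (1 / 2 : R) • (D₁ * D₁ᴴ + D₂ * D₂ᴴ) = 1 := by
    rw [hsum, ← one_add_one_eq_two (R := Matrix l l R), smul_add, ← add_smul, add_halves,
      one_smul]
  simp only [J, fromBlocks_conjTranspose, fromBlocks_multiply, conjTranspose_smul, star_div₀,
    star_one, star_ofNat, conjTranspose_neg, Matrix.mul_zero, Matrix.mul_one, Matrix.mul_neg,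
    zero_add, add_zero, Matrix.neg_mul, neg_neg, Matrix.smul_mul, Matrix.mul_smul, h₁₂, h₂₁,
    smul_zero, neg_zero, smul_neg, ← neg_add, ← smul_add, add_comm (D₂ * D₂ᴴ), half]

theorem fromBlocks_jump_average_relations {R l : Type*} [Ring R] [StarRing R] [Fintype l]
    [DecidableEq l] :
    let D₁ : Matrix (l ⊕ l) (l ⊕ l) R := fromBlocks 0 (-1) 0 1
    let D₂ : Matrix (l ⊕ l) (l ⊕ l) R := fromBlocks 1 0 1 0
    D₁ * D₂ᴴ = 0 ∧ D₂ * D₁ᴴ = 0 ∧ D₁ * D₁ᴴ + D₂ * D₂ᴴ = 2 := by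
  intro D₁ D₂
  refine ⟨?_, ?_, ?_⟩ <;>
    simp [D₁, D₂, fromBlocks_conjTranspose, fromBlocks_multiply, fromBlocks_add]
  rw [← one_add_one_eq_two, ← fromBlocks_one, fromBlocks_add, add_zero]

end Matrix

/-- If (A,B) satisfy the self-adjointness conditions (BC-KS), then so does the pair
(L,M) obtained by L = (1/2)(A·D1 + B·D2), M = B·D1 - A·D2, where
D1 = [[0,-1],[0,1]] and D2 = [[1,0],[1,0]]. -/
theorem lm_parameterization_selfadjoint {n : ℕ}
    (A B : Matrix (Fin n ⊕ Fin n) (Fin n ⊕ Fin n) ℂ)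
    (h1 : A * Bᴴ = B * Aᴴ)
    (h2 : (fromCols A B).rank = 2 * n) :
    (let D1 : Matrix (Fin n ⊕ Fin n) (Fin n ⊕ Fin n) ℂ := fromBlocks 0 (-1) 0 1
     let D2 : Matrix (Fin n ⊕ Fin n) (Fin n ⊕ Fin n) ℂ := fromBlocks 1 0 1 0
     let L : Matrix (Fin n ⊕ Fin n) (Fin n ⊕ Fin n) ℂ := (1 / 2 : ℂ) • (A * D1 + B * D2)
     let M : Matrix (Fin n ⊕ Fin n) (Fin n ⊕ Fin n) ℂ := B * D1 - A * D2
     L * Mᴴ = M * Lᴴ ∧ (fromCols L M).rank = 2 * n) := by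
  intro D1 D2 L M
  obtain ⟨h₁₂, h₂₁, hsum⟩ := fromBlocks_jump_average_relations (R := ℂ) (l := Fin n)
  have hT := fromBlocks_half_mul_J_mul_conjTranspose h₁₂ h₂₁ hsum
  have hLM : fromCols L M =
      fromCols A B * fromBlocks ((1 / 2 : ℂ) • D1) (-D2) ((1 / 2 : ℂ) • D2) D1 := by
    rw [fromCols_mul_fromBlocks, Matrix.mul_smul, Matrix.mul_smul, ← smul_add, Matrix.mul_neg,
      neg_add_eq_sub]
  exact ⟨mul_conjTranspose_comm_of_fromCols_eq_mul hT hLM h1,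
    (rank_fromCols_eq_of_fromCols_eq_mul hT hLM).trans h2⟩
end

section
/- Let C11, C12, C21, C22 be Hermitian n×n complex matrices satisfying the conditions (BC-CC): C12·C11 = C11·C12, C21·C22 = C22·C21, and C11·C22 − C12·C21 = I_n. Then the four matrices C11, C12, C21, C22 pairwise commute; consequently there exists a unitary n×n matrix Θ such that Θ⁻¹·C_jk·Θ is diagonal for all j, k ∈ {1, 2}. -/
/-!
Taking the adjoint of `C11 C22 - C12 C21 = 1` gives `C22 C11 - C21 C12 = 1`. Together with the two
given commutation relations this says that `[[C22, -C12], [-C21, C11]]` is a right inverse of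
`[[C11, C12], [C21, C22]]`. A one-sided inverse of a square matrix is two-sided, and the product in
the other order, read blockwise, gives the remaining commutation relations. Pairwise commuting
Hermitian matrices have a common orthonormal eigenbasis, whose vectors are the columns of `Θ`.
-/

open Matrix Module Module.End

namespace Matrix

variable {m : Type*} [Fintype m] [DecidableEq m]

theorem fromBlocks_mul_fromBlocks_eq_one {R : Type*} [Ring R] {A B C D : Matrix m m R}
    (hAB : Commute A B) (hCD : Commute C D) (hAD : A * D - B * C = 1) (hDA : D * A - C * B = 1) :
    fromBlocks A B C D * fromBlocks D (-B) (-C) A = 1 := by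
  rw [fromBlocks_multiply, ← fromBlocks_one, fromBlocks_inj]
  simp only [Matrix.mul_neg, ← sub_eq_add_neg, neg_add_eq_sub, hAB.eq, hCD.eq, sub_self, true_and]
  exact ⟨hAD, hDA⟩

theorem commute_blocks_of_mul_sub_mul_eq_one {R : Type*} [CommRing R] {A B C D : Matrix m m R}
    (hAB : Commute A B) (hCD : Commute C D) (hAD : A * D - B * C = 1) (hDA : D * A - C * B = 1) :
    Commute A C ∧ Commute A D ∧ Commute B C ∧ Commute B D := by
  have h := mul_eq_one_comm.mp (fromBlocks_mul_fromBlocks_eq_one hAB hCD hAD hDA)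
  rw [fromBlocks_multiply, ← fromBlocks_one, fromBlocks_inj] at h
  simp only [Matrix.neg_mul, ← sub_eq_add_neg, neg_add_eq_sub, sub_eq_zero] at h
  obtain ⟨hDA', hDB, hAC, hAD'⟩ := h
  exact ⟨hAC, sub_left_injective (hAD.trans hDA'.symm),
    sub_right_injective (hAD.trans hAD'.symm), hDB.symm⟩

end Matrix

section JointEigenbasis

variable {𝕜 E : Type*} [RCLike 𝕜] [NormedAddCommGroup E] [InnerProductSpace 𝕜 E]
  [FiniteDimensional 𝕜 E]

theorem DirectSum.IsInternal.exists_orthonormalBasis_subordinate {ι : Type*} [DecidableEq ι]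
    {V : ι → Submodule 𝕜 E} (hV : DirectSum.IsInternal V)
    (hV' : OrthogonalFamily 𝕜 (fun i => V i) fun i => (V i).subtypeₗᵢ) :
    ∃ (b : OrthonormalBasis (Fin (finrank 𝕜 E)) 𝕜 E) (f : Fin (finrank 𝕜 E) → ι),
      ∀ a, b a ∈ V (f a) := by
  -- `subordinateOrthonormalBasis` needs a finite index type: keep only the nonzero `V i`
  let := hV.submodule_iSupIndep.fintypeNeBotOfFiniteDimensional
  have hW := DirectSum.isInternal_ne_bot_iff.mpr hV
  have hW' := hV'.comp (f := fun i : {i // V i ≠ ⊥} => i.1) Subtype.val_injective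
  exact ⟨hW.subordinateOrthonormalBasis rfl hW',
    fun a => (hW.subordinateOrthonormalBasisIndex rfl a hW').1,
    fun a => hW.subordinateOrthonormalBasis_subordinate rfl a hW'⟩

theorem LinearMap.IsSymmetric.exists_orthonormalBasis_apply_eq_smul {ι : Type*}
    {T : ι → Module.End 𝕜 E} (hT : ∀ i, (T i).IsSymmetric)
    (hC : Pairwise fun i j => Commute (T i) (T j)) :
    ∃ (b : OrthonormalBasis (Fin (finrank 𝕜 E)) 𝕜 E) (f : Fin (finrank 𝕜 E) → ι → 𝕜),
      ∀ a i, T i (b a) = f a i • b a := by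
  classical
  obtain ⟨b, f, hb⟩ := (directSum_isInternal_of_pairwise_commute hT hC
    ).exists_orthonormalBasis_subordinate (orthogonalFamily_iInf_eigenspaces hT)
  exact ⟨b, f, fun a i => mem_eigenspace_iff.mp ((Submodule.mem_iInf _).mp (hb a) i)⟩

end JointEigenbasis

namespace Matrix

variable {R n : Type*} [CommSemiring R] [Fintype n] [DecidableEq n]

theorem mul_eq_mul_diagonal_of_mulVec_transpose_eq_smul {M U : Matrix n n R} {d : n → R}
    (h : ∀ j, M *ᵥ Uᵀ j = d j • Uᵀ j) : M * U = U * diagonal d := by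
  ext i j
  rw [mul_diagonal, mul_apply]
  simpa [mul_comm, mulVec, dotProduct] using congrFun (h j) i

variable {𝕜 : Type*} [RCLike 𝕜]

theorem exists_mem_unitaryGroup_isDiag_of_pairwise_commute {ι : Type*} {M : ι → Matrix n n 𝕜}
    (hM : ∀ i, (M i).IsHermitian) (hC : Pairwise fun i j => Commute (M i) (M j)) :
    ∃ U ∈ unitaryGroup n 𝕜, ∀ i, (star U * M i * U).IsDiag := by
  have hT (i : ι) : (toEuclideanLin (M i)).IsSymmetric := isSymmetric_toEuclideanLin_iff.mpr (hM i)
  have hTC : Pairwise fun i j => Commute (toEuclideanLin (M i)) (toEuclideanLin (M j)) :=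
    fun i j hij => (hC hij).map (toLpLinAlgEquiv 2)
  obtain ⟨b, f, hb⟩ := LinearMap.IsSymmetric.exists_orthonormalBasis_apply_eq_smul hT hTC
  let e : Fin (finrank 𝕜 (EuclideanSpace 𝕜 n)) ≃ n :=
    (finCongr finrank_euclideanSpace).trans (Fintype.equivFin n).symm
  let U := (EuclideanSpace.basisFun n 𝕜).toBasis.toMatrix (b.reindex e).toBasis
  have hU : U ∈ unitaryGroup n 𝕜 :=
    (EuclideanSpace.basisFun n 𝕜).toMatrix_orthonormalBasis_mem_unitary (b.reindex e)
  refine ⟨U, hU, fun i => ?_⟩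
  have hcol (a : n) : Uᵀ a = b.reindex e a := rfl
  have hMU : M i * U = U * diagonal fun a => f (e.symm a) i :=
    mul_eq_mul_diagonal_of_mulVec_transpose_eq_smul fun a => by
      simpa [hcol] using congrArg WithLp.ofLp (hb (e.symm a) i)
  rw [mul_assoc, hMU, ← mul_assoc, mem_unitaryGroup_iff'.mp hU, one_mul]
  exact isDiag_diagonal _

end Matrix

/-- Hermitian blocks of a transfer matrix satisfying the conditions (BC-CC) pairwise
commute; consequently they are simultaneously unitarily diagonalizable. -/
theorem hermitian_transfer_blocks_reducible {n : ℕ}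
    (C11 C12 C21 C22 : Matrix (Fin n) (Fin n) ℂ)
    (h11 : C11ᴴ = C11) (h12 : C12ᴴ = C12) (h21 : C21ᴴ = C21) (h22 : C22ᴴ = C22)
    (hcc1 : C12 * C11 = C11 * C12) (hcc2 : C21 * C22 = C22 * C21)
    (hcc3 : C11 * C22 - C12 * C21 = 1) :
    (C11 * C12 = C12 * C11 ∧ C11 * C21 = C21 * C11 ∧ C11 * C22 = C22 * C11 ∧
     C12 * C21 = C21 * C12 ∧ C12 * C22 = C22 * C12 ∧ C21 * C22 = C22 * C21) ∧
    ∃ Θ : Matrix (Fin n) (Fin n) ℂ, Θ * Θᴴ = 1 ∧ Θᴴ * Θ = 1 ∧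
      (Θ⁻¹ * C11 * Θ).IsDiag ∧ (Θ⁻¹ * C12 * Θ).IsDiag ∧
      (Θ⁻¹ * C21 * Θ).IsDiag ∧ (Θ⁻¹ * C22 * Θ).IsDiag := by
  have hcc4 : C22 * C11 - C21 * C12 = 1 := by
    simpa only [conjTranspose_sub, conjTranspose_mul, conjTranspose_one, h11, h12, h21, h22]
      using congrArg conjTranspose hcc3
  have hAB : Commute C11 C12 := hcc1.symm
  obtain ⟨hAC, hAD, hBC, hBD⟩ := commute_blocks_of_mul_sub_mul_eq_one hAB hcc2 hcc3 hcc4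
  let blocks := ![C11, C12, C21, C22]
  have hherm : ∀ i, (blocks i).IsHermitian := by
    simp [Fin.forall_fin_succ, blocks, IsHermitian, h11, h12, h21, h22]
  have hcomm : Pairwise fun i j => Commute (blocks i) (blocks j) := by
    intro i j _
    fin_cases i <;> fin_cases j <;>
      first | exact Commute.refl _ | assumption | exact Commute.symm ‹_›
  obtain ⟨Θ, hΘ, hdiag⟩ := exists_mem_unitaryGroup_isDiag_of_pairwise_commute hherm hcomm
  have hinv : Θ⁻¹ = star Θ := inv_eq_left_inv (mem_unitaryGroup_iff'.mp hΘ)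
  exact ⟨⟨hAB, hAC, hAD, hBC, hBD, hcc2⟩, Θ, mem_unitaryGroup_iff.mp hΘ,
    mem_unitaryGroup_iff'.mp hΘ, hinv ▸ hdiag 0, hinv ▸ hdiag 1, hinv ▸ hdiag 2, hinv ▸ hdiag 3⟩
end

section
/- Let (M_i)_{i ∈ I} be a family of n×n complex matrices. There exists a unitary n×n matrix Θ′ such that Θ′⁻¹·M_i·Θ′ is diagonal for every i ∈ I if and only if there exists a unitary n×n matrix Θ whose n eigenvalues are pairwise distinct and which commutes with every M_i (Θ·M_i = M_i·Θ for all i ∈ I). -/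
/-!
Conjugation by a unitary preserves the characteristic polynomial and commutation, diagonal
matrices commute, and a matrix commuting with a diagonal matrix with distinct entries is diagonal.
So if `Θ'` diagonalises the family, `Θ = Θ' D Θ'ᴴ` with `D` a diagonal of distinct roots of unity
works. Conversely, eigenvectors of a unitary matrix for distinct eigenvalues are orthogonal, so `n`
distinct eigenvalues give an orthonormal eigenbasis: `Θ = Θ' (diagonal μ) Θ'ᴴ` with `Θ'` unitary and
`μ` injective, and this `Θ'` diagonalises every matrix commuting with `Θ`.
-/

open Matrix Polynomial Function

theorem Polynomial.exists_injective_isRoot_of_card_toFinset_roots {R : Type*} [CommRing R]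
    [IsDomain R] [DecidableEq R] {p : R[X]} {n : ℕ} (h : p.roots.toFinset.card = n) :
    ∃ μ : Fin n → R, Injective μ ∧ ∀ k, p.IsRoot (μ k) :=
  let e := (Finset.equivFinOfCardEq h).symm
  ⟨fun k => e k, Subtype.val_injective.comp e.injective,
    fun k => isRoot_of_mem_roots (Multiset.mem_toFinset.1 (e k).2)⟩

theorem Unitary.commute_mul_mul_star_iff {R : Type*} [Semiring R] [StarMul R] {u : R}
    (hu : u ∈ unitary R) {a b : R} :
    Commute (u * a * star u) b ↔ Commute a (star u * b * u) := by
  let e := conjStarAlgAut ℕ R ⟨u, hu⟩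
  have h : Commute (e a) (e (e.symm b)) ↔ Commute a (e.symm b) := commute_map_iff e.injective
  rwa [e.apply_symm_apply] at h

namespace Matrix

section CommRing

variable {n R : Type*} [Fintype n] [DecidableEq n] [CommRing R]

theorem isDiag_of_commute_diagonal [NoZeroDivisors R] {d : n → R} (hd : Injective d)
    {A : Matrix n n R} (h : Commute (diagonal d) A) : A.IsDiag := by
  intro i j hij
  have hij' : d i * A i j = A i j * d j := by
    simpa [diagonal_mul, mul_diagonal] using congr_fun₂ h.eq i j
  have : (d i - d j) * A i j = 0 := by linear_combination hij'
  exact (mul_eq_zero.1 this).resolve_left (sub_ne_zero.2 (hd.ne hij))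

theorem card_toFinset_roots_charpoly_diagonal [IsDomain R] [DecidableEq R] {d : n → R}
    (hd : Injective d) : (diagonal d).charpoly.roots.toFinset.card = Fintype.card n := by
  have : ∏ i, (X - C (d i)) = ∏ a ∈ Finset.univ.map ⟨d, hd⟩, (X - C a) :=
    (Finset.prod_map Finset.univ ⟨d, hd⟩ fun a => X - C a).symm
  rw [charpoly_diagonal, this, roots_prod_X_sub_C, Finset.val_toFinset, Finset.card_map,
    Finset.card_univ]

theorem exists_mulVec_eq_smul_of_isRoot_charpoly [IsDomain R] {A : Matrix n n R} {μ : R}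
    (h : A.charpoly.IsRoot μ) : ∃ v ≠ 0, A *ᵥ v = μ • v := by
  rw [← charpoly_toLin', ← Module.End.hasEigenvalue_iff_isRoot_charpoly] at h
  obtain ⟨v, hv⟩ := h.exists_hasEigenvector
  exact ⟨v, hv.2, by simpa using hv.apply_eq_smul⟩

variable [StarRing R]

theorem diagonal_mem_unitaryGroup_iff {d : n → R} :
    diagonal d ∈ unitaryGroup n R ↔ ∀ i, star (d i) * d i = 1 := by
  rw [mem_unitaryGroup_iff', star_eq_conjTranspose, diagonal_conjTranspose,
    diagonal_mul_diagonal, ← diagonal_one, diagonal_eq_diagonal_iff]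
  rfl

theorem charpoly_mul_mul_star_of_mem_unitaryGroup {U : Matrix n n R}
    (hU : U ∈ unitaryGroup n R) (A : Matrix n n R) : (U * A * star U).charpoly = A.charpoly := by
  rw [charpoly_mul_comm, ← mul_assoc, Unitary.star_mul_self_of_mem hU, one_mul]

theorem star_mulVec_dotProduct_mulVec {U : Matrix n n R} (hU : U ∈ unitaryGroup n R)
    (v w : n → R) : star (U *ᵥ v) ⬝ᵥ (U *ᵥ w) = star v ⬝ᵥ w := by
  rw [star_mulVec, dotProduct_mulVec, vecMul_vecMul, ← star_eq_conjTranspose,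
    mem_unitaryGroup_iff'.1 hU, vecMul_one]

end CommRing

theorem exists_injective_diagonal_mem_unitaryGroup (n : ℕ) :
    ∃ d : Fin n → ℂ, Injective d ∧ diagonal d ∈ unitaryGroup (Fin n) ℂ := by
  -- order `n + 1` rather than `n`, so that `n = 0` needs no separate case
  obtain ⟨ζ, hζ⟩ : ∃ ζ : ℂ, IsPrimitiveRoot ζ (n + 1) :=
    ⟨_, Complex.isPrimitiveRoot_exp (n + 1) n.succ_ne_zero⟩
  refine ⟨fun k => ζ ^ (k : ℕ), fun i j h => Fin.ext (hζ.pow_inj (by omega) (by omega) h),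
    diagonal_mem_unitaryGroup_iff.2 fun k => ?_⟩
  rw [RCLike.star_def, RCLike.conj_mul, norm_pow, hζ.norm'_eq_one n.succ_ne_zero]
  simp

section RCLike

open scoped ComplexOrder

variable {n 𝕜 : Type*} [Fintype n] [DecidableEq n] [RCLike 𝕜] {U : Matrix n n 𝕜}

theorem star_mul_self_eq_one_of_mulVec_eq_smul (hU : U ∈ unitaryGroup n 𝕜) {v : n → 𝕜}
    {a : 𝕜} (hv : v ≠ 0) (h : U *ᵥ v = a • v) : star a * a = 1 := by
  have := star_mulVec_dotProduct_mulVec hU v v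
  rw [h, star_smul, smul_dotProduct, dotProduct_smul, smul_smul, smul_eq_mul] at this
  exact (mul_eq_right₀ (dotProduct_star_self_eq_zero.not.2 hv)).1 this

theorem star_dotProduct_eq_zero_of_mulVec_eq_smul (hU : U ∈ unitaryGroup n 𝕜) {v w : n → 𝕜}
    {a b : 𝕜} (hv : U *ᵥ v = a • v) (hw : U *ᵥ w = b • w) (hab : a ≠ b) :
    star v ⬝ᵥ w = 0 := by
  rcases eq_or_ne v 0 with rfl | hv0
  · simp
  have ha := star_mul_self_eq_one_of_mulVec_eq_smul hU hv0 hv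
  have hab' : star a * b ≠ 1 := fun h => hab <| by linear_combination b * ha - a * h
  have := star_mulVec_dotProduct_mulVec hU v w
  rw [hv, hw, star_smul, smul_dotProduct, dotProduct_smul, smul_smul, smul_eq_mul] at this
  exact (mul_left_eq_self₀.1 this).resolve_left hab'

theorem exists_mulVec_eq_smul_star_dotProduct_self_eq_one {A : Matrix n n 𝕜} {μ : 𝕜}
    (h : A.charpoly.IsRoot μ) : ∃ v, star v ⬝ᵥ v = 1 ∧ A *ᵥ v = μ • v := by
  obtain ⟨v, hv0, hv⟩ := exists_mulVec_eq_smul_of_isRoot_charpoly h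
  have hx : WithLp.toLp 2 v ≠ 0 := by simpa using hv0
  refine ⟨(‖WithLp.toLp 2 v‖⁻¹ : 𝕜) • v, ?_, by rw [mulVec_smul, hv, smul_comm]⟩
  have := inner_self_eq_norm_sq_to_K (𝕜 := 𝕜) ((‖WithLp.toLp 2 v‖⁻¹ : 𝕜) • WithLp.toLp 2 v)
  rwa [norm_smul_inv_norm hx, ← WithLp.toLp_smul, EuclideanSpace.inner_toLp_toLp,
    dotProduct_comm, RCLike.ofReal_one, one_pow] at this

theorem exists_mem_unitaryGroup_eq_mul_diagonal_mul_star (hU : U ∈ unitaryGroup n 𝕜)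
    {μ : n → 𝕜} (hμ : Injective μ) (hroot : ∀ k, U.charpoly.IsRoot (μ k)) :
    ∃ V ∈ unitaryGroup n 𝕜, U = V * diagonal μ * star V := by
  choose u hu_norm hu using fun k => exists_mulVec_eq_smul_star_dotProduct_self_eq_one (hroot k)
  set V : Matrix n n 𝕜 := of fun i k => u k i
  have hV : V ∈ unitaryGroup n 𝕜 := by
    refine mem_unitaryGroup_iff'.2 (ext fun j k => ?_)
    change star (u j) ⬝ᵥ u k = (1 : Matrix n n 𝕜) j k
    rcases eq_or_ne j k with rfl | hjk
    · rw [hu_norm j, one_apply_eq]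
    · rw [star_dotProduct_eq_zero_of_mulVec_eq_smul hU (hu j) (hu k) (hμ.ne hjk),
        one_apply_ne hjk]
  have hUV : U * V = V * diagonal μ := by
    ext i k
    rw [mul_diagonal, mul_comm]
    exact congr_fun (hu k) i
  refine ⟨V, hV, ?_⟩
  rw [← hUV, mul_assoc, mem_unitaryGroup_iff.1 hV, mul_one]

end RCLike

end Matrix

/-- A family of n×n complex matrices is simultaneously unitarily diagonalizable iff
there is a unitary matrix with pairwise distinct (non-degenerate) eigenvalues commuting
with every member of the family. -/
theorem simultaneously_diagonalizable_iff_commuting_unitary {n : ℕ} {I : Type*}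
    (M : I → Matrix (Fin n) (Fin n) ℂ) :
    (∃ Θ' : Matrix (Fin n) (Fin n) ℂ, Θ' * Θ'ᴴ = 1 ∧ Θ'ᴴ * Θ' = 1 ∧
       ∀ i, (Θ'⁻¹ * M i * Θ').IsDiag) ↔
    (∃ Θ : Matrix (Fin n) (Fin n) ℂ, Θ * Θᴴ = 1 ∧ Θᴴ * Θ = 1 ∧
       Θ.charpoly.roots.toFinset.card = n ∧
       ∀ i, Θ * M i = M i * Θ) := by
  constructor
  · rintro ⟨U, hU₁, hU₂, hdiag⟩
    have hU : U ∈ unitaryGroup (Fin n) ℂ := Unitary.mem_iff.2 ⟨hU₂, hU₁⟩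
    obtain ⟨d, hd, hD⟩ := exists_injective_diagonal_mem_unitaryGroup n
    have hΘ := Unitary.mem_iff.1 (mul_mem (mul_mem hU hD) (Unitary.star_mem hU))
    refine ⟨U * diagonal d * star U, hΘ.2, hΘ.1, ?_, fun i => ?_⟩
    · rw [charpoly_mul_mul_star_of_mem_unitaryGroup hU, card_toFinset_roots_charpoly_diagonal hd,
        Fintype.card_fin]
    · have hN := hdiag i
      rw [inv_eq_left_inv (Unitary.star_mul_self_of_mem hU)] at hN
      refine ((Unitary.commute_mul_mul_star_iff hU).2 ?_).eq
      rw [← hN.diagonal_diag]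
      exact commute_diagonal _ _
  · rintro ⟨Θ, hΘ₁, hΘ₂, hcard, hcomm⟩
    have hΘ : Θ ∈ unitaryGroup (Fin n) ℂ := Unitary.mem_iff.2 ⟨hΘ₂, hΘ₁⟩
    obtain ⟨μ, hμ, hroot⟩ := exists_injective_isRoot_of_card_toFinset_roots hcard
    obtain ⟨U, hU, rfl⟩ := exists_mem_unitaryGroup_eq_mul_diagonal_mul_star hΘ hμ hroot
    refine ⟨U, hU.2, hU.1, fun i => ?_⟩
    rw [inv_eq_left_inv hU.1]
    exact isDiag_of_commute_diagonal hμ ((Unitary.commute_mul_mul_star_iff hU).1 (hcomm i))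
end
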